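/- arXiv:2307.07669 — 2 statements merged into one kernel-verified Lean document; each statement's English description precedes it below -/
import Mathlib

section
/- The composition Ω ∘ Ψ is the identity on proper T-ideals: if J is a proper T-ideal of k⟨X⟩, Ψ(J) the operadic ideal of multilinear identities of k⟨X⟩/J, and Ω(Ψ(J)) the T-ideal generated by all substitution instances Φₙ(θ)(f₁,...,fₙ) with θ ∈ Ψ(J)(n) and fᵢ ∈ k⟨X⟩, then Ω(Ψ(J)) = J. -/
/-! Every element of `Ψ(J)` has all its substitution instances in `J`, so `Ω(Ψ(J)) ≤ J`.
Conversely, `Ω(I)` is a T-ideal for every `I`, and by Kemer's theorem `J` is generated as a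
T-ideal by finitely many multilinear polynomials `Φₙ(θ)`; since `J` is a T-ideal, each such `θ`
lies in `Ψ(J)`, so every generator, hence all of `J`, lies in `Ω(Ψ(J))`. -/

open scoped BigOperators

noncomputable section

namespace AsOperadPaper

/-- The free associative algebra `k⟨X⟩` on countably many indeterminates. -/
abbrev FX (k : Type) [Field k] := FreeAlgebra k ℕ

variable (k : Type) [Field k]

/-- The multilinear monomial `x_{σ⁻¹(1)} ⋯ x_{σ⁻¹(n)}` attached to a permutation `σ`. -/
def permMono (n : ℕ) (σ : Equiv.Perm (Fin n)) : FreeAlgebra k (Fin n) :=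
  (List.ofFn fun i => FreeAlgebra.ι k (σ⁻¹ i)).prod

/-- `Φₙ : k[Sₙ] → k⟨x₁,…,xₙ⟩`, `σ ↦ x_{σ⁻¹(1)} ⋯ x_{σ⁻¹(n)}`. -/
def Phi (n : ℕ) : MonoidAlgebra k (Equiv.Perm (Fin n)) →ₗ[k] FreeAlgebra k (Fin n) :=
  Finsupp.linearCombination k (permMono k n) ∘ₗ (MonoidAlgebra.coeffLinearEquiv k).toLinearMap

/-- `Vₙ`: the space of multilinear polynomials of degree `n`. -/
def Vmulti (n : ℕ) : Submodule k (FreeAlgebra k (Fin n)) :=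
  Submodule.span k (Set.range (permMono k n))

/-- The right `Sₙ`-action on polynomials: `x_{i₁}⋯x_{iₙ} * τ = x_{τ⁻¹(i₁)}⋯x_{τ⁻¹(iₙ)}`. -/
def permAction (n : ℕ) (τ : Equiv.Perm (Fin n)) : FreeAlgebra k (Fin n) →ₐ[k] FreeAlgebra k (Fin n) :=
  FreeAlgebra.lift k fun j => FreeAlgebra.ι k (τ⁻¹ j)

/-- `Vₙ(A)`: multilinear polynomials of degree `n` that are identities of `A`. -/
def VnA (A : Type) [Ring A] [Algebra k A] (n : ℕ) : Set (FreeAlgebra k (Fin n)) :=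
  { f | f ∈ Vmulti k n ∧ ∀ a : Fin n → A, FreeAlgebra.lift k a f = 0 }

/-- The kernel of `γₙ : As(n) → End_A(n)`, i.e. `Φₙ⁻¹(Vₙ(A))`. -/
def kerGamma (A : Type) [Ring A] [Algebra k A] (n : ℕ) :
    Set (MonoidAlgebra k (Equiv.Perm (Fin n))) :=
  { θ | ∀ a : Fin n → A, FreeAlgebra.lift k a (Phi k n θ) = 0 }

/-- Renaming `x₁,…,xₙ` into the first `n` variables of `k⟨X⟩`. -/
def toFX (n : ℕ) (f : FreeAlgebra k (Fin n)) : FX k :=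
  FreeAlgebra.lift k (fun i : Fin n => FreeAlgebra.ι k (i : ℕ)) f

/-- shift of variables used in partial composition -/
def shiftIn (m n : ℕ) (i : Fin m) : FreeAlgebra k (Fin n) →ₐ[k] FreeAlgebra k (Fin (m + n - 1)) :=
  FreeAlgebra.lift k fun t =>
    FreeAlgebra.ι k ⟨i.1 + t.1, by have h1 := i.isLt; have h2 := t.isLt; omega⟩

/-- substitution of `g` into the `i`-th variable (block substitution). -/
def insertAt (m n : ℕ) (i : Fin m) (g : FreeAlgebra k (Fin n)) :
    FreeAlgebra k (Fin m) →ₐ[k] FreeAlgebra k (Fin (m + n - 1)) :=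
  FreeAlgebra.lift k fun j =>
    if h1 : j.1 < i.1 then FreeAlgebra.ι k ⟨j.1, by have := i.isLt; omega⟩
    else if h2 : j.1 = i.1 then shiftIn k m n i g
    else FreeAlgebra.ι k ⟨j.1 + n - 1, by have := j.isLt; omega⟩

/-- The partial composition `μ ∘ᵢ ν`, expressed on the polynomial side:
`f(x₁,…,x_{i-1}, g(xᵢ,…,x_{i+n-1}), x_{i+n},…,x_{m+n-1})`. -/
def compAt (m n : ℕ) (i : Fin m) (f : FreeAlgebra k (Fin m)) (g : FreeAlgebra k (Fin n)) :
    FreeAlgebra k (Fin (m + n - 1)) :=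
  insertAt k m n i g f

/-- An operadic ideal of the associative operad `As` (with `As(n) = k[Sₙ]`):
a collection of `k`-subspaces invariant under the right `Sₙ`-action and closed
under partial composition (on either side) with arbitrary elements of `As`,
where partial composition is read through the identification `Φ`. -/
structure IsOperadicIdeal (I : ∀ n, Set (MonoidAlgebra k (Equiv.Perm (Fin n)))) : Prop where
  zero_mem : ∀ n, (0 : MonoidAlgebra k (Equiv.Perm (Fin n))) ∈ I n
  add_mem : ∀ n x y, x ∈ I n → y ∈ I n → x + y ∈ I n
  smul_mem : ∀ (n) (c : k) (x), x ∈ I n → c • x ∈ I n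
  perm_mem : ∀ (n) (x) (τ : Equiv.Perm (Fin n)), x ∈ I n →
    x * MonoidAlgebra.of k (Equiv.Perm (Fin n)) τ ∈ I n
  comp_mem : ∀ (m n : ℕ) (i : Fin m) (μ : MonoidAlgebra k (Equiv.Perm (Fin m)))
    (ν : MonoidAlgebra k (Equiv.Perm (Fin n)))
    (ρ : MonoidAlgebra k (Equiv.Perm (Fin (m + n - 1)))),
    (μ ∈ I m ∨ ν ∈ I n) →
    Phi k (m + n - 1) ρ = compAt k m n i (Phi k m μ) (Phi k n ν) → ρ ∈ I (m + n - 1)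

/-- A proper operadic ideal: not all of `As`. -/
def OperadProper (I : ∀ n, Set (MonoidAlgebra k (Equiv.Perm (Fin n)))) : Prop :=
  ∃ n, I n ≠ Set.univ

/-- `I` is the operadic ideal of `As` generated by the set `S`. -/
def OperadGeneratedBy (I : ∀ n, Set (MonoidAlgebra k (Equiv.Perm (Fin n))))
    (S : Set (Σ n, MonoidAlgebra k (Equiv.Perm (Fin n)))) : Prop :=
  IsOperadicIdeal k I ∧ (∀ s ∈ S, s.2 ∈ I s.1) ∧
    ∀ J, IsOperadicIdeal k J → (∀ s ∈ S, s.2 ∈ J s.1) → ∀ n, I n ⊆ J n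

/-- A T-ideal: a two-sided ideal stable under every algebra endomorphism of `k⟨X⟩`. -/
def IsTIdeal (J : TwoSidedIdeal (FX k)) : Prop :=
  ∀ φ : FX k →ₐ[k] FX k, ∀ x ∈ J, φ x ∈ J

/-- `J` is the T-ideal of `k⟨X⟩` generated by `S`. -/
def TIdealGeneratedBy (J : TwoSidedIdeal (FX k)) (S : Set (FX k)) : Prop :=
  IsTIdeal k J ∧ (∀ s ∈ S, s ∈ J) ∧
    ∀ J' : TwoSidedIdeal (FX k), IsTIdeal k J' → (∀ s ∈ S, s ∈ J') → J ≤ J'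

/-- `Ψ(J)(n) = Φₙ⁻¹(Vₙ(k⟨X⟩/J))`: the multilinear identities of `k⟨X⟩/J`, i.e. those
`θ` all of whose substitution instances land in `J`. -/
def PsiSet (J : TwoSidedIdeal (FX k)) (n : ℕ) : Set (MonoidAlgebra k (Equiv.Perm (Fin n))) :=
  { θ | ∀ u : Fin n → FX k, FreeAlgebra.lift k u (Phi k n θ) ∈ J }

/-- The set of all substitution instances `Φₙ(θ)(f₁,…,fₙ)`, `θ ∈ I(n)`, `fᵢ ∈ k⟨X⟩`. -/
def OmegaSet (I : ∀ n, Set (MonoidAlgebra k (Equiv.Perm (Fin n)))) : Set (FX k) :=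
  { y | ∃ (n : ℕ) (θ : MonoidAlgebra k (Equiv.Perm (Fin n))) (u : Fin n → FX k),
      θ ∈ I n ∧ y = FreeAlgebra.lift k u (Phi k n θ) }

/-- `Ω(I)`: the ideal of `k⟨X⟩` generated by all substitution instances of elements of `I`. -/
def OmegaI (I : ∀ n, Set (MonoidAlgebra k (Equiv.Perm (Fin n)))) : TwoSidedIdeal (FX k) :=
  TwoSidedIdeal.span (OmegaSet k I)

/-- `Id(A)`: the set of polynomial identities of `A` inside `k⟨X⟩`. -/
def IdOf (A : Type) [Ring A] [Algebra k A] : Set (FX k) :=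
  { f | ∀ φ : FX k →ₐ[k] A, φ f = 0 }

/-- `I_f`: all finite sums `Σ gᵢ f(u_{i1},…,u_{in}) hᵢ`. -/
def Iset (n : ℕ) (f : FreeAlgebra k (Fin n)) : Set (FX k) :=
  { y | ∃ (m : ℕ) (g h : Fin m → FX k) (u : Fin m → Fin n → FX k),
      y = ∑ i, g i * FreeAlgebra.lift k (u i) f * h i }

variable (k : Type) [Field k]

theorem _root_.FreeAlgebra.comp_lift {R X A B : Type*} [CommSemiring R] [Semiring A] [Algebra R A]
    [Semiring B] [Algebra R B] (φ : A →ₐ[R] B) (u : X → A) :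
    φ.comp (FreeAlgebra.lift R u) = FreeAlgebra.lift R (φ ∘ u) :=
  FreeAlgebra.hom_ext <| funext fun x => by simp

theorem lift_toFX {n : ℕ} (v : ℕ → FX k) (f : FreeAlgebra k (Fin n)) :
    FreeAlgebra.lift k v (toFX k n f) = FreeAlgebra.lift k (fun i : Fin n => v i) f := by
  rw [toFX, ← AlgHom.comp_apply, FreeAlgebra.comp_lift]
  congr 2
  ext i
  simp

theorem range_Phi (n : ℕ) : LinearMap.range (Phi k n) = Vmulti k n := by
  rw [Phi, LinearMap.range_comp_of_range_eq_top _ (LinearEquiv.range _),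
    Finsupp.range_linearCombination, Vmulti]

theorem lift_Phi_mem_OmegaI {I : ∀ n, Set (MonoidAlgebra k (Equiv.Perm (Fin n)))} {n : ℕ}
    {θ : MonoidAlgebra k (Equiv.Perm (Fin n))} (hθ : θ ∈ I n) (u : Fin n → FX k) :
    FreeAlgebra.lift k u (Phi k n θ) ∈ OmegaI k I :=
  TwoSidedIdeal.subset_span ⟨n, θ, u, hθ, rfl⟩

theorem OmegaI_PsiSet_le (J : TwoSidedIdeal (FX k)) : OmegaI k (PsiSet k J) ≤ J :=
  TwoSidedIdeal.span_le.mpr <| by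
    rintro _ ⟨n, θ, u, hθ, rfl⟩
    exact hθ u

theorem isTIdeal_OmegaI (I : ∀ n, Set (MonoidAlgebra k (Equiv.Perm (Fin n)))) :
    IsTIdeal k (OmegaI k I) := by
  intro φ x hx
  have h_le_comap : OmegaI k I ≤ TwoSidedIdeal.comap φ (OmegaI k I) := by
    refine TwoSidedIdeal.span_le.mpr ?_
    rintro _ ⟨n, θ, u, hθ, rfl⟩
    rw [SetLike.mem_coe, TwoSidedIdeal.mem_comap, ← AlgHom.comp_apply, FreeAlgebra.comp_lift]
    exact lift_Phi_mem_OmegaI k hθ _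
  exact (TwoSidedIdeal.mem_comap _).mp (h_le_comap hx)

theorem mem_PsiSet_of_toFX_mem {J : TwoSidedIdeal (FX k)} (hJ : IsTIdeal k J) {n : ℕ}
    {θ : MonoidAlgebra k (Equiv.Perm (Fin n))} (hθ : toFX k n (Phi k n θ) ∈ J) :
    θ ∈ PsiSet k J n := by
  intro u
  have := hJ (FreeAlgebra.lift k fun j => if h : j < n then u ⟨j, h⟩ else 0) _ hθ
  simpa only [lift_toFX, Fin.is_lt, dite_true] using this

theorem Omega_Psi_eq_id
    (hKemer : ∀ J' : TwoSidedIdeal (FX k), IsTIdeal k J' → J' ≠ ⊤ →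
      ∃ S : Finset (Σ n, FreeAlgebra k (Fin n)), (∀ w ∈ S, w.2 ∈ Vmulti k w.1) ∧
        TIdealGeneratedBy k J' {y | ∃ w ∈ S, y = toFX k w.1 w.2})
    (J : TwoSidedIdeal (FX k)) (hJ : IsTIdeal k J) (hJp : J ≠ ⊤) :
    OmegaI k (PsiSet k J) = J := by
  refine le_antisymm (OmegaI_PsiSet_le k J) ?_
  obtain ⟨S, hS_multilinear, -, hS_mem, hS_least⟩ := hKemer J hJ hJp
  refine hS_least _ (isTIdeal_OmegaI k _) ?_
  rintro _ ⟨⟨n, f⟩, hfS, rfl⟩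
  obtain ⟨θ, rfl⟩ : f ∈ LinearMap.range (Phi k n) := (range_Phi k n).symm ▸ hS_multilinear _ hfS
  exact lift_Phi_mem_OmegaI k (mem_PsiSet_of_toFX_mem k hJ (hS_mem _ ⟨_, hfS, rfl⟩)) _

end AsOperadPaper
end
end

section
/- Assuming every proper operadic ideal of As is generated by a single element, every proper T-ideal of k⟨X⟩ is generated by one multilinear polynomial as a T-ideal: namely if I = Ψ(J) is generated by θ ∈ I(n), then J is the T-ideal generated by the multilinear polynomial Φₙ(θ). -/
open scoped BigOperators

noncomputable section

namespace AsOperadPaper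

variable (k : Type) [Field k]

/-! A T-ideal `J'` contains `Φₙ(θ)`, written in the first `n` variables, exactly when
`θ ∈ Ψ(J')(n)`, since every substitution instance of it is an endomorphic image. So if `Ψ(J)`
is generated by `θ` and `J'` is a proper T-ideal containing `Φₙ(θ)`, then `Ψ(J) ⊆ Ψ(J')`, whence
`J = Ω(Ψ(J)) ≤ J'` because `Ω(I) ≤ J'` amounts to `I ⊆ Ψ(J')`. -/

theorem lift_extend_toFX {A : Type} [Semiring A] [Algebra k A] (n : ℕ) (u : Fin n → A)
    (f : FreeAlgebra k (Fin n)) :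
    FreeAlgebra.lift k (fun m : ℕ => if h : m < n then u ⟨m, h⟩ else 0) (toFX k n f) =
      FreeAlgebra.lift k u f := by
  rw [toFX, ← AlgHom.comp_apply]
  congr 1
  ext i
  simp [i.isLt]

theorem mem_PsiSet_iff_toFX_mem {J : TwoSidedIdeal (FX k)} (hJ : IsTIdeal k J) (n : ℕ)
    (θ : MonoidAlgebra k (Equiv.Perm (Fin n))) :
    θ ∈ PsiSet k J n ↔ toFX k n (Phi k n θ) ∈ J := by
  refine ⟨fun hθ => hθ _, fun hθ u => ?_⟩
  rw [← lift_extend_toFX]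
  exact hJ _ _ hθ

theorem OmegaI_le_iff (I : ∀ n, Set (MonoidAlgebra k (Equiv.Perm (Fin n))))
    (J : TwoSidedIdeal (FX k)) :
    OmegaI k I ≤ J ↔ ∀ n, I n ⊆ PsiSet k J n := by
  rw [OmegaI, TwoSidedIdeal.span_le]
  constructor
  · intro hI n θ hθ u
    exact hI ⟨n, θ, u, hθ, rfl⟩
  · rintro hI _ ⟨n, θ, u, hθ, rfl⟩
    exact hI n hθ u

theorem proper_TIdeal_generated_by_one_multilinear
    (hPsiOp : ∀ J : TwoSidedIdeal (FX k), IsTIdeal k J → J ≠ ⊤ →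
      IsOperadicIdeal k (PsiSet k J) ∧ OperadProper k (PsiSet k J))
    (hinv1 : ∀ J : TwoSidedIdeal (FX k), IsTIdeal k J → J ≠ ⊤ → OmegaI k (PsiSet k J) = J)
    (hsingle : ∀ I, IsOperadicIdeal k I → OperadProper k I →
      ∃ (n : ℕ) (θ : MonoidAlgebra k (Equiv.Perm (Fin n))), θ ∈ I n ∧
        OperadGeneratedBy k I {⟨n, θ⟩})
    (J : TwoSidedIdeal (FX k)) (hJ : IsTIdeal k J) (hJp : J ≠ ⊤) :
    (∃ (n : ℕ) (θ : MonoidAlgebra k (Equiv.Perm (Fin n))), θ ∈ PsiSet k J n ∧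
      OperadGeneratedBy k (PsiSet k J) {⟨n, θ⟩}) ∧
    ∀ (n : ℕ) (θ : MonoidAlgebra k (Equiv.Perm (Fin n))), θ ∈ PsiSet k J n →
      OperadGeneratedBy k (PsiSet k J) {⟨n, θ⟩} →
      TIdealGeneratedBy k J {toFX k n (Phi k n θ)} := by
  obtain ⟨hIop, hIprop⟩ := hPsiOp J hJ hJp
  refine ⟨hsingle _ hIop hIprop, fun n θ hθ hgen => ⟨hJ, ?_, ?_⟩⟩
  · rintro _ rfl
    exact (mem_PsiSet_iff_toFX_mem k hJ n θ).mp hθ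
  · intro J' hJ' hθJ'
    rcases eq_or_ne J' ⊤ with rfl | hJ'p
    · exact le_top
    have hPsi_le : ∀ m, PsiSet k J m ⊆ PsiSet k J' m := by
      refine hgen.2.2 _ (hPsiOp J' hJ' hJ'p).1 ?_
      rintro _ rfl
      exact (mem_PsiSet_iff_toFX_mem k hJ' n θ).mpr (hθJ' _ rfl)
    rw [← hinv1 J hJ hJp]
    exact (OmegaI_le_iff k _ J').mpr hPsi_le

end AsOperadPaper
end
end
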